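/- Let Q be a real-entried matrix of size m × n (viewed in ℂ), and let M : Matrix (Fin m) (Fin n) ℂ, U : Matrix (Fin m) (Fin r) ℂ, Y : Matrix (Fin r) (Fin n) ℂ, and d : Matrix (Fin m) (Fin r) ℂ with ‖Q ∘ (d ⬝ Y)‖_F ≠ 0. Define g = −((Q ∘ Q) ∘ (M − U ⬝ Y)) ⬝ Yᴴ and γ = Re⟨g, d⟩_F. Then μ* = γ / ‖Q ∘ (d ⬝ Y)‖_F² is the unique real minimizer of the function μ ↦ ‖Q ∘ (M − (U − μ • d) ⬝ Y)‖_F², i.e., for all μ ∈ ℝ, ‖Q ∘ (M − (U − μ* • d) ⬝ Y)‖_F² ≤ ‖Q ∘ (M − (U − μ • d) ⬝ Y)‖_F², with equality only when μ = μ*. -/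

import Mathlib

open Finset Matrix

/-- Frobenius norm of a complex matrix. -/
noncomputable def frobNorm {m n : Type*} [Fintype m] [Fintype n]
    (A : Matrix m n ℂ) : ℝ :=
  Real.sqrt (∑ i, ∑ j, ‖A i j‖ ^ 2)

/-- Frobenius inner product of complex matrices. -/
noncomputable def frobInner {m n : Type*} [Fintype m] [Fintype n]
    (A B : Matrix m n ℂ) : ℂ :=
  ∑ i, ∑ j, starRingEnd ℂ (A i j) * B i j

/-!
Substituting `U - μ • d` makes the weighted residual affine in `μ`, namely `R + μ • B` with
`R = Q ∘ (M - U Y)` and `B = Q ∘ (d Y)`, so the objective is the real quadratic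
`‖R‖² + 2 μ Re⟨R, B⟩ + μ² ‖B‖²` with leading coefficient `‖B‖² > 0`. Since `Q` is real, `Q ∘ ·` and
`· Yᴴ` move across the inner product, which gives `γ = Re⟨g, d⟩ = -Re⟨R, B⟩`; hence `μ*` is the
vertex of the parabola.
-/

theorem quadratic_vertex_le_and_eq_imp {a b c x₀ : ℝ} (ha : 0 < a) (hx₀ : a * x₀ = -b) (x : ℝ) :
    c + 2 * x₀ * b + x₀ ^ 2 * a ≤ c + 2 * x * b + x ^ 2 * a ∧
      (c + 2 * x₀ * b + x₀ ^ 2 * a = c + 2 * x * b + x ^ 2 * a → x = x₀) := by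
  have hshift : c + 2 * x * b + x ^ 2 * a = c + 2 * x₀ * b + x₀ ^ 2 * a + a * (x - x₀) ^ 2 := by
    linear_combination (2 * (x - x₀)) * hx₀
  rw [hshift]
  refine ⟨le_add_of_nonneg_right (by positivity), fun h => ?_⟩
  have : a * (x - x₀) ^ 2 = 0 := by linarith
  simpa [ha.ne', sub_eq_zero] using this

section Frobenius

variable {m n k : Type*} [Fintype m] [Fintype n] [Fintype k]

theorem frobNorm_sq (A : Matrix m n ℂ) : frobNorm A ^ 2 = ∑ i, ∑ j, Complex.normSq (A i j) := by
  rw [frobNorm, Real.sq_sqrt (by positivity)]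
  simp only [Complex.sq_norm]

theorem frobNorm_add_smul_sq (R B : Matrix m n ℂ) (μ : ℝ) :
    frobNorm (R + (μ : ℂ) • B) ^ 2
      = frobNorm R ^ 2 + 2 * μ * (frobInner R B).re + μ ^ 2 * frobNorm B ^ 2 := by
  have hentry (z w : ℂ) : Complex.normSq (z + μ * w)
      = Complex.normSq z + 2 * μ * (starRingEnd ℂ z * w).re + μ ^ 2 * Complex.normSq w := by
    rw [Complex.normSq_add, Complex.normSq_mul, Complex.normSq_ofReal]
    simp only [Complex.mul_re, Complex.mul_im, Complex.conj_re, Complex.conj_im,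
      Complex.ofReal_re, Complex.ofReal_im]
    ring
  simp only [frobNorm_sq, frobInner, Complex.re_sum, Matrix.add_apply, Matrix.smul_apply,
    smul_eq_mul, hentry, Finset.sum_add_distrib, ← Finset.mul_sum]

theorem frobInner_neg_left (A B : Matrix m n ℂ) : frobInner (-A) B = -frobInner A B := by
  simp [frobInner]

theorem frobInner_mul_conjTranspose_left (A : Matrix m n ℂ) (Y : Matrix k n ℂ)
    (D : Matrix m k ℂ) : frobInner (A * Yᴴ) D = frobInner A (D * Y) := by
  simp only [frobInner, Matrix.mul_apply, Matrix.conjTranspose_apply, map_sum, map_mul,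
    RCLike.star_def, Complex.conj_conj, Finset.sum_mul, Finset.mul_sum]
  refine Finset.sum_congr rfl fun i _ => ?_
  rw [Finset.sum_comm]
  exact Finset.sum_congr rfl fun j _ => Finset.sum_congr rfl fun l _ => by ring

theorem frobInner_hadamard_left_of_real {P : Matrix m n ℂ} (hP : ∀ i j, (P i j).im = 0)
    (A B : Matrix m n ℂ) : frobInner (P ⊙ A) B = frobInner A (P ⊙ B) := by
  have hconj : ∀ i j, starRingEnd ℂ (P i j) = P i j := fun i j => Complex.conj_eq_iff_im.2 (hP i j)
  simp only [frobInner, Matrix.hadamard_apply, map_mul, hconj]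
  exact Finset.sum_congr rfl fun i _ => Finset.sum_congr rfl fun j _ => by ring

end Frobenius

theorem sub_sub_smul_mul {m n r : Type*} [Fintype r] (M : Matrix m n ℂ) (U D : Matrix m r ℂ)
    (Y : Matrix r n ℂ) (c : ℂ) : M - (U - c • D) * Y = M - U * Y + c • (D * Y) := by
  rw [Matrix.sub_mul, Matrix.smul_mul]
  abel

/-- The exact line-search step size `μ* = γ / ‖Q ∘ (d⬝Y)‖²` is the unique real
minimizer of `μ ↦ ‖Q ∘ (M − (U − μ•d)⬝Y)‖²`. -/
theorem linesearch_unique_minimizer {m n r : ℕ}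
    (Q : Matrix (Fin m) (Fin n) ℂ) (hQ : ∀ i j, (Q i j).im = 0)
    (M : Matrix (Fin m) (Fin n) ℂ) (U : Matrix (Fin m) (Fin r) ℂ)
    (Y : Matrix (Fin r) (Fin n) ℂ)
    (d : Matrix (Fin m) (Fin r) ℂ)
    (hd : frobNorm (Q ⊙ (d * Y)) ≠ 0)
    (g : Matrix (Fin m) (Fin r) ℂ)
    (hg : g = -(((Q ⊙ Q) ⊙ (M - U * Y)) * Yᴴ))
    (γ : ℝ) (hγ : γ = (frobInner g d).re)
    (μstar : ℝ) (hμstar : μstar = γ / frobNorm (Q ⊙ (d * Y)) ^ 2) :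
    ∀ μ : ℝ,
      frobNorm (Q ⊙ (M - (U - (μstar : ℂ) • d) * Y)) ^ 2 ≤
        frobNorm (Q ⊙ (M - (U - (μ : ℂ) • d) * Y)) ^ 2 ∧
      (frobNorm (Q ⊙ (M - (U - (μstar : ℂ) • d) * Y)) ^ 2 =
        frobNorm (Q ⊙ (M - (U - (μ : ℂ) • d) * Y)) ^ 2 → μ = μstar) := by
  set R := Q ⊙ (M - U * Y)
  set B := Q ⊙ (d * Y)
  have hexpand (ν : ℝ) : frobNorm (Q ⊙ (M - (U - (ν : ℂ) • d) * Y)) ^ 2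
      = frobNorm R ^ 2 + 2 * ν * (frobInner R B).re + ν ^ 2 * frobNorm B ^ 2 := by
    rw [sub_sub_smul_mul, Matrix.hadamard_add, Matrix.hadamard_smul, frobNorm_add_smul_sq]
  have hγR : γ = -(frobInner R B).re := by
    rw [hγ, hg, frobInner_neg_left, frobInner_mul_conjTranspose_left, Matrix.hadamard_assoc,
      frobInner_hadamard_left_of_real hQ, Complex.neg_re]
  have hvertex : frobNorm B ^ 2 * μstar = -(frobInner R B).re := by
    rw [hμstar, ← hγR]
    field_simp
  intro μ
  rw [hexpand, hexpand]
  exact quadratic_vertex_le_and_eq_imp (by positivity) hvertex μ
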